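/- arXiv:0806.2979 — 2 statements merged into one kernel-verified Lean document; each statement's English description precedes it below -/
import Mathlib

section
/- Let f(z) = z(e^{4π|z|²} - 1) for z ∈ ℂ. For every ε > 0 there is a constant C_ε > 0 such that for all z₁, z₂ ∈ ℂ: |f(z₁) - f(z₂)| ≤ C_ε |z₁ - z₂| · ((e^{4π(1+ε)|z₁|²} - 1) + (e^{4π(1+ε)|z₂|²} - 1)). -/
/-! Write `t = 4π‖z₁‖² ≥ 4π‖z₂‖²`. Splitting
`f z₁ - f z₂ = (e^t - 1)(z₁ - z₂) + (e^t - e^{4π‖z₂‖²}) z₂` and using the convexity bound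
`e^t - e^s ≤ e^t (t - s)` together with `‖z₁‖ - ‖z₂‖ ≤ ‖z₁ - z₂‖` gives
`‖f z₁ - f z₂‖ ≤ ‖z₁ - z₂‖ ((e^t - 1) + 2t e^t)`. The polynomial factor `t` is then absorbed
by the extra exponential growth: `ε t e^t ≤ e^{(1+ε)t} - 1`. -/

noncomputable def f (z : ℂ) : ℂ := z * ((Real.exp (4 * Real.pi * ‖z‖ ^ 2) - 1 : ℝ) : ℂ)

open Real

lemma exp_sub_exp_le_exp_mul_sub (x y : ℝ) : exp x - exp y ≤ exp x * (x - y) := by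
  have hy : exp y = exp x * exp (y - x) := by rw [← exp_add, add_sub_cancel]
  nlinarith [exp_pos x, add_one_le_exp (y - x)]

lemma mul_mul_exp_le_exp_one_add_mul_sub_one {ε t : ℝ} (ht : 0 ≤ t) :
    ε * t * exp t ≤ exp ((1 + ε) * t) - 1 := by
  have hsplit : exp ((1 + ε) * t) = exp t * exp (ε * t) := by rw [← exp_add]; ring_nf
  nlinarith [add_one_le_exp (ε * t), one_le_exp ht]

lemma exp_sub_one_add_two_mul_mul_exp_le {ε t : ℝ} (hε : 0 < ε) (ht : 0 ≤ t) :
    (exp t - 1) + 2 * t * exp t ≤ (1 + 2 / ε) * (exp ((1 + ε) * t) - 1) := by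
  have hmono : exp t ≤ exp ((1 + ε) * t) := exp_le_exp.2 (by nlinarith)
  have hpoly : 2 * t * exp t = 2 / ε * (ε * t * exp t) := by field_simp
  have hgrowth := mul_mul_exp_le_exp_one_add_mul_sub_one (ε := ε) ht
  rw [hpoly]
  nlinarith [div_pos two_pos hε]

section RadialExp

variable {V : Type*} [NormedAddCommGroup V] [NormedSpace ℝ V]

lemma norm_smul_sub_smul_le (a b : ℝ) (x y : V) :
    ‖a • x - b • y‖ ≤ |a| * ‖x - y‖ + |a - b| * ‖y‖ := by
  have hsplit : a • x - b • y = a • (x - y) + (a - b) • y := by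
    rw [smul_sub, sub_smul]; abel
  rw [hsplit]
  refine (norm_add_le _ _).trans_eq ?_
  rw [norm_smul, norm_smul, Real.norm_eq_abs, Real.norm_eq_abs]

noncomputable def radialExp (a : ℝ) (x : V) : V := (exp (a * ‖x‖ ^ 2) - 1) • x

lemma norm_radialExp_sub_le_of_norm_le {a : ℝ} (ha : 0 ≤ a) {x y : V} (hyx : ‖y‖ ≤ ‖x‖) :
    ‖radialExp a x - radialExp a y‖ ≤
      ‖x - y‖ * ((exp (a * ‖x‖ ^ 2) - 1) + 2 * (a * ‖x‖ ^ 2) * exp (a * ‖x‖ ^ 2)) := by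
  set t := a * ‖x‖ ^ 2
  set s := a * ‖y‖ ^ 2
  have hst : s ≤ t := mul_le_mul_of_nonneg_left (pow_le_pow_left₀ (norm_nonneg y) hyx 2) ha
  have ht : 0 ≤ t := by positivity
  have hsplit := norm_smul_sub_smul_le (exp t - 1) (exp s - 1) x y
  rw [sub_sub_sub_cancel_right, abs_of_nonneg (by linarith [one_le_exp ht]),
    abs_of_nonneg (by linarith [exp_le_exp.2 hst])] at hsplit
  have hnorms : ‖y‖ * (t - s) ≤ 2 * t * ‖x - y‖ :=
    calc ‖y‖ * (t - s) = a * (‖y‖ * (‖x‖ + ‖y‖)) * (‖x‖ - ‖y‖) := by ring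
      _ ≤ a * (2 * ‖x‖ ^ 2) * ‖x - y‖ := by
          have hsum : ‖y‖ * (‖x‖ + ‖y‖) ≤ 2 * ‖x‖ ^ 2 := by nlinarith [norm_nonneg y]
          exact mul_le_mul (mul_le_mul_of_nonneg_left hsum ha) (norm_sub_norm_le x y)
            (by linarith) (by positivity)
      _ = 2 * t * ‖x - y‖ := by ring
  calc ‖radialExp a x - radialExp a y‖
      ≤ (exp t - 1) * ‖x - y‖ + (exp t - exp s) * ‖y‖ := hsplit
    _ ≤ (exp t - 1) * ‖x - y‖ + exp t * (‖y‖ * (t - s)) := by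
        nlinarith [exp_sub_exp_le_exp_mul_sub t s, norm_nonneg y]
    _ ≤ (exp t - 1) * ‖x - y‖ + exp t * (2 * t * ‖x - y‖) := by gcongr
    _ = ‖x - y‖ * ((exp t - 1) + 2 * t * exp t) := by ring

lemma norm_radialExp_sub_le {a ε : ℝ} (ha : 0 ≤ a) (hε : 0 < ε) (x y : V) :
    ‖radialExp a x - radialExp a y‖ ≤ (1 + 2 / ε) * ‖x - y‖ *
      ((exp (a * (1 + ε) * ‖x‖ ^ 2) - 1) + (exp (a * (1 + ε) * ‖y‖ ^ 2) - 1)) := by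
  wlog hyx : ‖y‖ ≤ ‖x‖ generalizing x y
  · rw [norm_sub_rev, norm_sub_rev x, add_comm (exp (a * (1 + ε) * ‖x‖ ^ 2) - 1)]
    exact this y x (le_of_not_ge hyx)
  have hgrowth : 0 ≤ exp (a * (1 + ε) * ‖y‖ ^ 2) - 1 := by
    linarith [one_le_exp (by positivity : 0 ≤ a * (1 + ε) * ‖y‖ ^ 2)]
  have hexp := exp_sub_one_add_two_mul_mul_exp_le hε (by positivity : 0 ≤ a * ‖x‖ ^ 2)
  rw [show (1 + ε) * (a * ‖x‖ ^ 2) = a * (1 + ε) * ‖x‖ ^ 2 by ring] at hexp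
  calc ‖radialExp a x - radialExp a y‖
      ≤ ‖x - y‖ * ((1 + 2 / ε) * (exp (a * (1 + ε) * ‖x‖ ^ 2) - 1)) :=
        (norm_radialExp_sub_le_of_norm_le ha hyx).trans (by gcongr)
    _ = (1 + 2 / ε) * ‖x - y‖ * (exp (a * (1 + ε) * ‖x‖ ^ 2) - 1) := by ring
    _ ≤ _ := by gcongr; exact le_add_of_nonneg_right hgrowth

end RadialExp

lemma f_eq_radialExp (z : ℂ) : f z = radialExp (4 * π) z := by
  rw [f, radialExp, mul_comm, Complex.real_smul]

theorem stmt5 (ε : ℝ) (hε : 0 < ε) :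
    ∃ C : ℝ, 0 < C ∧ ∀ z₁ z₂ : ℂ,
      ‖f z₁ - f z₂‖ ≤ C * ‖z₁ - z₂‖ *
        ((Real.exp (4 * Real.pi * (1 + ε) * ‖z₁‖ ^ 2) - 1) +
         (Real.exp (4 * Real.pi * (1 + ε) * ‖z₂‖ ^ 2) - 1)) := by
  refine ⟨1 + 2 / ε, by positivity, fun z₁ z₂ => ?_⟩
  rw [f_eq_radialExp, f_eq_radialExp]
  exact norm_radialExp_sub_le (by positivity) hε z₁ z₂
end

section
/- Let f(z) = z(e^{4π|z|²} - 1), viewed as a smooth map ℝ² → ℝ², with total (Fréchet) derivative Df. For every ε > 0 there is a constant C_ε > 0 such that for all z₁, z₂ ∈ ℂ: ‖(Df)(z₁) - (Df)(z₂)‖ ≤ C_ε |z₁ - z₂| · Σ_{i=1,2} (|z_i| + e^{4π(1+ε)|z_i|²} - 1). -/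
/-!
Writing `f z = (exp (4π‖z‖²) - 1) • z`, the derivative is
`Df(z) = (exp (4π‖z‖²) - 1) • id + 8π exp (4π‖z‖²) • ⟪z, ·⟫ z`. With `M = max ‖z₁‖ ‖z₂‖`,
the mean value bound for `exp` and bilinearity of `⟪x, ·⟫ y` give
`‖Df(z₁) - Df(z₂)‖ ≲ ‖z₁ - z₂‖ (M + M³) exp (4πM²)`. For `M ≤ 1` this is `≲ M`; for `M ≥ 1`
the factor `M³` is absorbed by `exp (4πεM²)`, since `exp x ≥ x² / 2`.
-/

open Real InnerProductSpace

lemma abs_exp_sub_exp_le_exp_max_mul (x y : ℝ) :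
    |exp x - exp y| ≤ exp (max x y) * |x - y| := by
  wlog hyx : y ≤ x generalizing x y
  · simpa only [abs_sub_comm, max_comm] using this y x (le_of_not_ge hyx)
  have hshift : exp x * exp (y - x) = exp y := by rw [← exp_add, add_sub_cancel]
  rw [max_eq_left hyx, abs_of_nonneg (sub_nonneg.2 (exp_le_exp.2 hyx)),
    abs_of_nonneg (sub_nonneg.2 hyx)]
  nlinarith [exp_pos x, add_one_le_exp (y - x)]

lemma abs_exp_mul_sq_sub_exp_mul_sq_le {a r s : ℝ} (ha : 0 ≤ a) (hr : 0 ≤ r) (hs : 0 ≤ s) :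
    |exp (a * r ^ 2) - exp (a * s ^ 2)| ≤
      2 * a * max r s * exp (a * max r s ^ 2) * |r - s| := by
  have hmono : MonotoneOn (fun t : ℝ => a * t ^ 2) (Set.Ici 0) := fun u hu v _ huv =>
    mul_le_mul_of_nonneg_left (pow_le_pow_left₀ hu huv 2) ha
  have hmax : max (a * r ^ 2) (a * s ^ 2) = a * max r s ^ 2 := (hmono.map_max hr hs).symm
  have hdiff : |a * r ^ 2 - a * s ^ 2| ≤ 2 * a * max r s * |r - s| := by
    rw [show a * r ^ 2 - a * s ^ 2 = a * (r + s) * (r - s) by ring, abs_mul,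
      abs_of_nonneg (by positivity : 0 ≤ a * (r + s))]
    have hsum : a * (r + s) ≤ 2 * a * max r s := by
      nlinarith [le_max_left r s, le_max_right r s]
    exact mul_le_mul_of_nonneg_right hsum (abs_nonneg _)
  calc |exp (a * r ^ 2) - exp (a * s ^ 2)|
      ≤ exp (a * max r s ^ 2) * |a * r ^ 2 - a * s ^ 2| := by
        rw [← hmax]; exact abs_exp_sub_exp_le_exp_max_mul _ _
    _ ≤ exp (a * max r s ^ 2) * (2 * a * max r s * |r - s|) := by gcongr
    _ = _ := by ring

section RadialExp

variable {E : Type*} [NormedAddCommGroup E] [InnerProductSpace ℝ E]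

lemma norm_rankOne_self_sub_rankOne_self_le (x y : E) :
    ‖rankOne ℝ x x - rankOne ℝ y y‖ ≤ (‖x‖ + ‖y‖) * ‖x - y‖ := by
  have hsplit : rankOne ℝ x x - rankOne ℝ y y = rankOne ℝ (x - y) x + rankOne ℝ y (x - y) := by
    simp only [map_sub, sub_apply]; abel
  calc ‖rankOne ℝ x x - rankOne ℝ y y‖ ≤ ‖x - y‖ * ‖x‖ + ‖y‖ * ‖x - y‖ := by
        rw [hsplit, ← norm_rankOne (𝕜 := ℝ), ← norm_rankOne (𝕜 := ℝ)]
        exact norm_add_le _ _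
    _ = _ := by ring

noncomputable def radialExpDeriv (a : ℝ) (x : E) : E →L[ℝ] E :=
  (exp (a * ‖x‖ ^ 2) - 1) • ContinuousLinearMap.id ℝ E +
    (2 * a * exp (a * ‖x‖ ^ 2)) • rankOne ℝ x x

lemma hasFDerivAt_exp_mul_norm_sq_sub_one_smul (a : ℝ) (x : E) :
    HasFDerivAt (fun y : E => (exp (a * ‖y‖ ^ 2) - 1) • y) (radialExpDeriv a x) x := by
  have hexp := (((hasStrictFDerivAt_norm_sq x).hasFDerivAt.const_mul a).exp).sub_const 1
  refine (hexp.smul (hasFDerivAt_id x)).congr_fderiv ?_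
  ext w
  simp only [radialExpDeriv, add_apply, smul_apply, ContinuousLinearMap.id_apply,
    ContinuousLinearMap.smulRight_apply, coe_innerSL_apply, rankOne_apply, id_eq, smul_smul,
    nsmul_eq_mul, Nat.cast_ofNat, smul_eq_mul, add_right_inj]
  ring_nf

lemma norm_radialExpDeriv_sub_le {a : ℝ} (ha : 0 ≤ a) (x y : E) :
    ‖radialExpDeriv a x - radialExpDeriv a y‖ ≤ (6 * a + 4 * a ^ 2) * ‖x - y‖ *
      ((max ‖x‖ ‖y‖ + max ‖x‖ ‖y‖ ^ 3) * exp (a * max ‖x‖ ‖y‖ ^ 2)) := by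
  set M := max ‖x‖ ‖y‖
  set d := ‖x - y‖
  set eₓ := exp (a * ‖x‖ ^ 2)
  set e_y := exp (a * ‖y‖ ^ 2)
  set e := exp (a * M ^ 2)
  have hxM : ‖x‖ ≤ M := le_max_left _ _
  have hyM : ‖y‖ ≤ M := le_max_right _ _
  have hM : 0 ≤ M := (norm_nonneg x).trans hxM
  have hd : 0 ≤ d := norm_nonneg _
  have he_y : e_y ≤ e := exp_le_exp.2 (by gcongr)
  have hexp : |eₓ - e_y| ≤ 2 * a * M * e * d := by
    simpa only [← norm_sub_rev y x] using
      (abs_exp_mul_sq_sub_exp_mul_sq_le ha (norm_nonneg x) (norm_nonneg y)).trans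
        (by gcongr; exact abs_norm_sub_norm_le x y)
  have hsplit : radialExpDeriv a x - radialExpDeriv a y =
      (eₓ - e_y) • ContinuousLinearMap.id ℝ E + (2 * a * (eₓ - e_y)) • rankOne ℝ x x +
        (2 * a * e_y) • (rankOne ℝ x x - rankOne ℝ y y) := by
    simp only [radialExpDeriv, smul_sub, sub_smul, mul_sub]; abel
  calc ‖radialExpDeriv a x - radialExpDeriv a y‖
      ≤ |eₓ - e_y| * 1 + 2 * a * |eₓ - e_y| * (‖x‖ * ‖x‖) +
          2 * a * e_y * ((‖x‖ + ‖y‖) * d) := by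
        rw [hsplit]
        refine (norm_add₃_le).trans (add_le_add_three ?_ ?_ ?_) <;>
          rw [norm_smul, Real.norm_eq_abs]
        · gcongr
          exact ContinuousLinearMap.norm_id_le
        · rw [norm_rankOne, abs_mul, abs_of_nonneg (by positivity : 0 ≤ 2 * a)]
        · rw [abs_of_nonneg (by positivity)]
          gcongr
          exact norm_rankOne_self_sub_rankOne_self_le x y
    _ ≤ 2 * a * M * e * d * 1 + 2 * a * (2 * a * M * e * d) * (M * M) +
          2 * a * e * ((M + M) * d) := by gcongr
    _ = (6 * a * M + 4 * a ^ 2 * M ^ 3) * e * d := by ring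
    _ ≤ (6 * a + 4 * a ^ 2) * d * ((M + M ^ 3) * e) := by
        have hcoeff : 6 * a * M + 4 * a ^ 2 * M ^ 3 ≤ (6 * a + 4 * a ^ 2) * (M + M ^ 3) := by
          nlinarith [pow_nonneg hM 3, sq_nonneg a]
        nlinarith [mul_nonneg (exp_pos (a * M ^ 2)).le hd]

end RadialExp

lemma exists_add_pow_three_mul_exp_le {a b : ℝ} (ha : 0 ≤ a) (hab : a < b) :
    ∃ C, 0 < C ∧ ∀ m, 0 ≤ m →
      (m + m ^ 3) * exp (a * m ^ 2) ≤ C * (m + exp (b * m ^ 2) - 1) := by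
  have hba : 0 < b - a := sub_pos.2 hab
  refine ⟨2 * exp a + 4 / (b - a) ^ 2, by positivity, fun m hm => ?_⟩
  have hexp_b : 1 ≤ exp (b * m ^ 2) := one_le_exp (by nlinarith)
  rcases le_total m 1 with hm1 | hm1
  · have hsmall : (m + m ^ 3) * exp (a * m ^ 2) ≤ 2 * exp a * m := by
      have hm3 : m ^ 3 ≤ m := by nlinarith
      have hexp_a : exp (a * m ^ 2) ≤ exp a :=
        exp_le_exp.2 (mul_le_of_le_one_right ha (by nlinarith))
      nlinarith [exp_pos (a * m ^ 2)]
    nlinarith [mul_nonneg (by positivity : (0 : ℝ) ≤ 4 / (b - a) ^ 2) hm,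
      mul_nonneg (by positivity : (0 : ℝ) ≤ 2 * exp a + 4 / (b - a) ^ 2) (sub_nonneg.2 hexp_b)]
  · have hpoly : m + m ^ 3 ≤ 4 / (b - a) ^ 2 * exp ((b - a) * m ^ 2) := by
      calc m + m ^ 3 ≤ 2 * m ^ 4 := by
            nlinarith [pow_le_pow_right₀ hm1 (show 1 ≤ 4 by norm_num),
              pow_le_pow_right₀ hm1 (show 3 ≤ 4 by norm_num)]
        _ = 4 / (b - a) ^ 2 * (((b - a) * m ^ 2) ^ 2 / (Nat.factorial 2)) := by
            field_simp; norm_num [Nat.factorial]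
        _ ≤ _ := by gcongr; exact pow_div_factorial_le_exp _ (by positivity) 2
    have hsplit : exp ((b - a) * m ^ 2) * exp (a * m ^ 2) = exp (b * m ^ 2) := by
      rw [← exp_add, ← add_mul, sub_add_cancel]
    calc (m + m ^ 3) * exp (a * m ^ 2)
        ≤ 4 / (b - a) ^ 2 * exp ((b - a) * m ^ 2) * exp (a * m ^ 2) := by gcongr
      _ = 4 / (b - a) ^ 2 * exp (b * m ^ 2) := by rw [mul_assoc, hsplit]
      _ ≤ (2 * exp a + 4 / (b - a) ^ 2) * (m + exp (b * m ^ 2) - 1) := by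
        nlinarith [mul_nonneg (by positivity : (0 : ℝ) ≤ 4 / (b - a) ^ 2) (sub_nonneg.2 hm1),
          mul_nonneg (exp_pos a).le (by linarith : 0 ≤ m + exp (b * m ^ 2) - 1)]

lemma max_add_exp_mul_sq_sub_one_le {b r s : ℝ} (hb : 0 ≤ b) (hr : 0 ≤ r) (hs : 0 ≤ s) :
    max r s + exp (b * max r s ^ 2) - 1 ≤
      (r + exp (b * r ^ 2) - 1) + (s + exp (b * s ^ 2) - 1) := by
  have hr' : 1 ≤ exp (b * r ^ 2) := one_le_exp (by positivity)
  have hs' : 1 ≤ exp (b * s ^ 2) := one_le_exp (by positivity)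
  rcases max_choice r s with h | h <;> rw [h] <;> linarith

lemma fderiv_f (z : ℂ) : fderiv ℝ f z = radialExpDeriv (4 * π) z := by
  have hf : f = fun w : ℂ => (exp (4 * π * ‖w‖ ^ 2) - 1) • w := by
    ext1 w
    rw [f, Complex.real_smul, mul_comm]
  rw [hf]
  exact (hasFDerivAt_exp_mul_norm_sq_sub_one_smul _ z).fderiv

theorem stmt6 (ε : ℝ) (hε : 0 < ε) :
    ∃ C : ℝ, 0 < C ∧ ∀ z₁ z₂ : ℂ,
      ‖fderiv ℝ f z₁ - fderiv ℝ f z₂‖ ≤ C * ‖z₁ - z₂‖ *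
        ((‖z₁‖ + Real.exp (4 * Real.pi * (1 + ε) * ‖z₁‖ ^ 2) - 1) +
         (‖z₂‖ + Real.exp (4 * Real.pi * (1 + ε) * ‖z₂‖ ^ 2) - 1)) := by
  have hπ : 0 < 4 * π := by positivity
  obtain ⟨C, hC, hscalar⟩ :=
    exists_add_pow_three_mul_exp_le hπ.le (lt_mul_of_one_lt_right hπ (lt_add_of_pos_right 1 hε))
  refine ⟨(6 * (4 * π) + 4 * (4 * π) ^ 2) * C, by positivity, fun z₁ z₂ => ?_⟩
  set M := max ‖z₁‖ ‖z₂‖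
  have hM : 0 ≤ M := (norm_nonneg _).trans (le_max_left _ _)
  rw [fderiv_f, fderiv_f]
  calc _ ≤ (6 * (4 * π) + 4 * (4 * π) ^ 2) * ‖z₁ - z₂‖ * ((M + M ^ 3) * exp (4 * π * M ^ 2)) :=
        norm_radialExpDeriv_sub_le hπ.le z₁ z₂
    _ ≤ (6 * (4 * π) + 4 * (4 * π) ^ 2) * ‖z₁ - z₂‖ *
          (C * (M + exp (4 * π * (1 + ε) * M ^ 2) - 1)) := by
        exact mul_le_mul_of_nonneg_left (hscalar M hM) (by positivity)
    _ ≤ (6 * (4 * π) + 4 * (4 * π) ^ 2) * ‖z₁ - z₂‖ *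
          (C * ((‖z₁‖ + exp (4 * π * (1 + ε) * ‖z₁‖ ^ 2) - 1) +
            (‖z₂‖ + exp (4 * π * (1 + ε) * ‖z₂‖ ^ 2) - 1))) := by
        gcongr
        exact max_add_exp_mul_sq_sub_one_le (by positivity) (norm_nonneg _) (norm_nonneg _)
    _ = _ := by ring
end
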